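/- For each i with 1 ≤ i ≤ n−1, the intertwining identity ι ∘ T_i = β̃_i ∘ ι holds as homomorphisms F → E; that is, the action of β̃_i on the elements ι(x_{k,j}) of E is given exactly by the formulas defining T_i. -/

import Mathlib

/-- The free group `E` on the generators `e_{k,j}`, `k = 0,1,…,n`, `j ∈ ℤ/dℤ`,
of the covering groupoid of the `d`-fold branched cover over a disk with `n`
branch points. -/
abbrev Egrp (n d : ℕ) : Type := FreeGroup (Fin (n + 1) × ZMod d)

open Fin.NatCast in
/-- The generator `e_{k,j}` of `E` (first index read as a natural number). -/
def eGen (n d : ℕ) (k : ℕ) (j : ZMod d) : Egrp n d :=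
  FreeGroup.of ((k : Fin (n + 1)), j)

/-- The lift `β̃_i` of the half Dehn twist `β_i`, as an endomorphism of the
free group `E`, defined on generators by
`e_{i−1,j} ↦ e_{i−1,j}·e_{i,j+1}`, `e_{i,j} ↦ e_{i,j+1}⁻¹`,
`e_{i+1,j} ↦ e_{i,j}·e_{i+1,j}`, and fixing all other generators. -/
def betaTilde (n d : ℕ) (i : ℕ) : Egrp n d →* Egrp n d :=
  FreeGroup.lift fun p =>
    if (p.1 : ℕ) + 1 = i then
      FreeGroup.of p * eGen n d i (p.2 + 1)
    else if (p.1 : ℕ) = i then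
      (FreeGroup.of (p.1, p.2 + 1))⁻¹
    else if (p.1 : ℕ) = i + 1 then
      eGen n d i p.2 * FreeGroup.of p
    else
      FreeGroup.of p


/-- The free group `F` on the `(d−1)(n−1)` generators `x_{i,j}`,
`i = 1,…,n−1`, `j = 1,…,d−1`. -/
abbrev Fgrp (n d : ℕ) : Type := FreeGroup (Fin (n - 1) × Fin (d - 1))

/-- The element `x_{k,j}` of `F`, with the second index read modulo `d`:
for `j ≡ 1,…,d−1 (mod d)` it is the corresponding generator, and for
`j ≡ 0 (mod d)` (i.e. `j = d`) it is `x_{k,d} := (x_{k,1}·x_{k,2}·…·x_{k,d−1})⁻¹`.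
(Junk value `1` outside the valid index ranges.) -/
def X (n d k j : ℕ) : Fgrp n d :=
  if hk : k - 1 < n - 1 then
    if j % d = 0 then
      ((List.ofFn fun b : Fin (d - 1) =>
        FreeGroup.of ((⟨k - 1, hk⟩ : Fin (n - 1)), b)).prod)⁻¹
    else if hj : j % d - 1 < d - 1 then
      FreeGroup.of ((⟨k - 1, hk⟩ : Fin (n - 1)), (⟨j % d - 1, hj⟩ : Fin (d - 1)))
    else 1
  else 1

/-- The element `y_{k,j} := x_{k,1}·x_{k,2}·…·x_{k,j−1}` of `F`. -/
def Y (n d k j : ℕ) : Fgrp n d :=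
  ((List.range (j - 1)).map fun t => X n d k (t + 1)).prod

/-- The endomorphism `T_i` of the free group `F`, defined on the generators
(with `1 ≤ k ≤ n−1`, `1 ≤ j ≤ d−1`) by
`x_{i−1,j} ↦ x_{i−1,j−1}⁻¹·…·x_{i−1,1}⁻¹·x_{i,j+1}·x_{i−1,1}·…·x_{i−1,j}`,
`x_{i,j} ↦ x_{i,2}·…·x_{i,j}·x_{i,j+1}⁻¹·x_{i,j}⁻¹·…·x_{i,2}⁻¹`,
`x_{i+1,j} ↦ x_{i,j−1}⁻¹·…·x_{i,1}⁻¹·x_{i+1,j}·x_{i,1}·…·x_{i,j}`,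
fixing all other generators. -/
def T (n d : ℕ) (i : ℕ) : Fgrp n d →* Fgrp n d :=
  FreeGroup.lift fun p =>
    let k := (p.1 : ℕ) + 1
    let j := (p.2 : ℕ) + 1
    if k + 1 = i then
      (Y n d k j)⁻¹ * X n d i (j + 1) * Y n d k (j + 1)
    else if k = i then
      (((List.range (j - 1)).map fun t => X n d i (t + 2)).prod) *
        (X n d i (j + 1))⁻¹ *
        (((List.range (j - 1)).map fun t => X n d i (t + 2)).prod)⁻¹
    else if k = i + 1 then
      (Y n d i j)⁻¹ * X n d k j * Y n d i (j + 1)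
    else
      FreeGroup.of p

open Fin.NatCast in
/-- The path `p_k := e_{0,1}·e_{1,1}·…·e_{k−1,1}` in `E`. -/
def pathP (n d k : ℕ) : Egrp n d :=
  ((List.range k).map fun t => FreeGroup.of (((t : ℕ) : Fin (n + 1)), (1 : ZMod d))).prod

/-- The homomorphism `ι : F → E` determined on generators by
`ι(x_{k,j}) = p_k·e_{k,j}·e_{k,j+1}⁻¹·p_k⁻¹`. -/
def iota (n d : ℕ) : Fgrp n d →* Egrp n d :=
  FreeGroup.lift fun p =>
    let k := (p.1 : ℕ) + 1
    let j := (p.2 : ℕ) + 1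
    pathP n d k * eGen n d k (j : ZMod d) * (eGen n d k ((j : ZMod d) + 1))⁻¹ *
      (pathP n d k)⁻¹

/-!
`ι(x_{k,j})` is the loop `p_k·e_{k,j}·e_{k,j+1}⁻¹·p_k⁻¹`, and such loops telescope:
`ι(x_{k,a}⋯x_{k,b−1}) = p_k·e_{k,a}·e_{k,b}⁻¹·p_k⁻¹`; in particular `ι(y_{k,j})` and the image of
the extra letter `x_{k,d}` are loops of the same shape. On the other side, `β̃_i` fixes `p_k` for
`k < i` and `k > i + 1`, sends `p_i` to `p_i·e_{i,2}` and `p_{i+1} = p_i·e_{i,1}` to `p_i`. So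
`ι(T_i x_{k,j})` and `β̃_i(ι x_{k,j})` are both products of such loops, and they agree case by case
(`k = i − 1`, `k = i`, `k = i + 1`, or none of these).
-/

def loop (n d k : ℕ) (a b : ZMod d) : Egrp n d :=
  pathP n d k * eGen n d k a * (eGen n d k b)⁻¹ * (pathP n d k)⁻¹

section

variable {n d : ℕ}

lemma loop_mul_loop (k : ℕ) (a b c : ZMod d) :
    loop n d k a b * loop n d k b c = loop n d k a c := by
  simp only [loop]; group

lemma loop_inv (k : ℕ) (a b : ZMod d) : (loop n d k a b)⁻¹ = loop n d k b a := by
  simp only [loop]; group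

lemma loop_self (k : ℕ) (a : ZMod d) : loop n d k a a = 1 := by
  simp only [loop]; group

lemma pathP_succ (k : ℕ) : pathP n d (k + 1) = pathP n d k * eGen n d k 1 := by
  simp [pathP, eGen, List.range_succ]

lemma X_eq_of {k j : ℕ} (hk : 1 ≤ k) (hkn : k < n) (hj : 1 ≤ j) (hjd : j < d) :
    X n d k j = FreeGroup.of (⟨k - 1, by omega⟩, ⟨j - 1, by omega⟩) := by
  have hjmod : j % d = j := Nat.mod_eq_of_lt hjd
  simp only [X, dif_pos (show k - 1 < n - 1 by omega), hjmod, if_neg (show j ≠ 0 by omega),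
    dif_pos (show j - 1 < d - 1 by omega)]

lemma X_self_eq_inv_Y {k : ℕ} (hk : 1 ≤ k) (hkn : k < n) : X n d k d = (Y n d k d)⁻¹ := by
  rw [X, dif_pos (show k - 1 < n - 1 by omega), if_pos (Nat.mod_self d), Y, List.ofFn_eq_map,
    ← List.map_coe_finRange_eq_range, List.map_map]
  congr 2
  refine List.map_congr_left fun b _ => ?_
  rw [Function.comp_apply, X_eq_of hk hkn (by omega) (by omega)]
  simp

lemma iota_of (p : Fin (n - 1) × Fin (d - 1)) :
    iota n d (FreeGroup.of p) = loop n d ((p.1 : ℕ) + 1) ((p.2 : ℕ) + 1) ((p.2 : ℕ) + 2) := by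
  simp [iota, loop, add_assoc, one_add_one_eq_two]

lemma iota_X_of_lt {k j : ℕ} (hk : 1 ≤ k) (hkn : k < n) (hj : 1 ≤ j) (hjd : j < d) :
    iota n d (X n d k j) = loop n d k j (j + 1) := by
  obtain ⟨j, rfl⟩ : ∃ j', j = j' + 1 := ⟨j - 1, by omega⟩
  rw [X_eq_of hk hkn hj hjd, iota_of]
  simp only [Nat.sub_add_cancel hk, Nat.add_sub_cancel]
  push_cast; ring_nf

lemma iota_prod_X {k : ℕ} (hk : 1 ≤ k) (hkn : k < n) {c : ℕ} (hc : 1 ≤ c) :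
    ∀ m, c + m ≤ d →
      iota n d (((List.range m).map fun t => X n d k (t + c)).prod) = loop n d k c (c + m)
  | 0, _ => by simp [loop_self]
  | m + 1, h => by
    rw [List.range_succ, List.map_append, List.prod_append, map_mul,
      iota_prod_X hk hkn hc m (by omega)]
    simp only [List.map_cons, List.map_nil, List.prod_cons, List.prod_nil, mul_one]
    rw [iota_X_of_lt hk hkn (by omega) (by omega),
      show ((m + c : ℕ) : ZMod d) = c + m by push_cast; ring, loop_mul_loop]
    push_cast; ring_nf

lemma iota_Y {k : ℕ} (hk : 1 ≤ k) (hkn : k < n) (j : ℕ) (hjd : j + 1 ≤ d) :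
    iota n d (Y n d k (j + 1)) = loop n d k 1 (j + 1) := by
  rw [Y, Nat.add_sub_cancel, iota_prod_X hk hkn le_rfl j (by omega)]
  push_cast; ring_nf

lemma iota_X {k j : ℕ} (hk : 1 ≤ k) (hkn : k < n) (hj : 1 ≤ j) (hjd : j ≤ d) :
    iota n d (X n d k j) = loop n d k j (j + 1) := by
  obtain hjd | rfl := hjd.lt_or_eq
  · exact iota_X_of_lt hk hkn hj hjd
  · obtain ⟨d, rfl⟩ : ∃ d', j = d' + 1 := ⟨j - 1, by omega⟩
    rw [X_self_eq_inv_Y hk hkn, map_inv, iota_Y hk hkn d le_rfl, loop_inv]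
    push_cast
    simp

open Fin.NatCast in
lemma betaTilde_eGen (i : ℕ) {k : ℕ} (hk : k ≤ n) (a : ZMod d) :
    betaTilde n d i (eGen n d k a) =
      if k + 1 = i then eGen n d k a * eGen n d i (a + 1)
      else if k = i then (eGen n d k (a + 1))⁻¹
      else if k = i + 1 then eGen n d i a * eGen n d k a
      else eGen n d k a := by
  have hval : ((k : Fin (n + 1)) : ℕ) = k := Fin.val_cast_of_lt (by omega)
  simp [betaTilde, eGen, hval]

lemma betaTilde_pathP_of_lt {i k : ℕ} (hki : k < i) (hkn : k ≤ n) :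
    betaTilde n d i (pathP n d k) = pathP n d k := by
  induction k with
  | zero => simp [pathP]
  | succ k ih =>
    rw [pathP_succ, map_mul, ih (by omega) (by omega), betaTilde_eGen i (by omega),
      if_neg (by omega), if_neg (by omega), if_neg (by omega)]

lemma betaTilde_pathP_self {i : ℕ} (hi : 1 ≤ i) (hin : i ≤ n) :
    betaTilde n d i (pathP n d i) = pathP n d i * eGen n d i 2 := by
  obtain ⟨k, rfl⟩ : ∃ k, i = k + 1 := ⟨i - 1, by omega⟩
  rw [pathP_succ, map_mul, betaTilde_pathP_of_lt (by omega) (by omega),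
    betaTilde_eGen _ (by omega), if_pos rfl, one_add_one_eq_two, mul_assoc]

lemma betaTilde_pathP_succ_self {i : ℕ} (hi : 1 ≤ i) (hin : i + 1 ≤ n) :
    betaTilde n d i (pathP n d (i + 1)) = pathP n d i := by
  rw [pathP_succ, map_mul, betaTilde_pathP_self hi (by omega), betaTilde_eGen _ (by omega),
    if_neg (by omega), if_pos rfl, one_add_one_eq_two, mul_inv_cancel_right]

lemma betaTilde_pathP_of_gt {i k : ℕ} (hi : 1 ≤ i) (hik : i + 1 < k) (hkn : k ≤ n) :
    betaTilde n d i (pathP n d k) = pathP n d k := by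
  induction k, hik using Nat.le_induction with
  | base =>
    rw [pathP_succ, map_mul, betaTilde_pathP_succ_self hi (by omega), betaTilde_eGen _ (by omega),
      if_neg (by omega), if_neg (by omega), if_pos rfl, pathP_succ, mul_assoc]
  | succ k hk ih =>
    rw [pathP_succ, map_mul, ih (by omega), betaTilde_eGen _ (by omega),
      if_neg (by omega), if_neg (by omega), if_neg (by omega)]

lemma betaTilde_loop_of_succ_eq {i k : ℕ} (hki : k + 1 = i) (hin : i ≤ n) (a b : ZMod d) :
    betaTilde n d i (loop n d k a b) =
      loop n d k a 1 * loop n d i (a + 1) (b + 1) * loop n d k 1 b := by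
  subst hki
  have hpath : betaTilde n d (k + 1) (pathP n d k) = pathP n d k :=
    betaTilde_pathP_of_lt k.lt_succ_self (by omega)
  simp only [loop, map_mul, map_inv, hpath, betaTilde_eGen (k + 1) (show k ≤ n by omega), if_pos,
    pathP_succ]
  group

lemma betaTilde_loop_self {i : ℕ} (hi : 1 ≤ i) (hin : i ≤ n) (a b : ZMod d) :
    betaTilde n d i (loop n d i a b) = loop n d i 2 (a + 1) * loop n d i (b + 1) 2 := by
  simp only [loop, map_mul, map_inv, betaTilde_pathP_self hi hin, betaTilde_eGen i hin,
    if_neg (Nat.succ_ne_self i), if_pos]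
  group

lemma betaTilde_loop_succ_self {i : ℕ} (hi : 1 ≤ i) (hin : i + 1 ≤ n) (a b : ZMod d) :
    betaTilde n d i (loop n d (i + 1) a b) =
      loop n d i a 1 * loop n d (i + 1) a b * loop n d i 1 b := by
  simp only [loop, map_mul, map_inv, betaTilde_pathP_succ_self hi hin, betaTilde_eGen i hin,
    if_neg (show i + 1 + 1 ≠ i by omega), if_neg (Nat.succ_ne_self i), if_pos]
  rw [pathP_succ]
  group

lemma betaTilde_loop_of_ne {i k : ℕ} (hi : 1 ≤ i) (hkn : k ≤ n)
    (h₁ : k + 1 ≠ i) (h₂ : k ≠ i) (h₃ : k ≠ i + 1) (a b : ZMod d) :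
    betaTilde n d i (loop n d k a b) = loop n d k a b := by
  have hpath : betaTilde n d i (pathP n d k) = pathP n d k := by
    obtain hk | hk := lt_or_gt_of_ne h₂
    · exact betaTilde_pathP_of_lt hk hkn
    · exact betaTilde_pathP_of_gt hi (by omega) hkn
  simp only [loop, map_mul, map_inv, hpath, betaTilde_eGen i hkn, if_neg h₁, if_neg h₂, if_neg h₃]

end

theorem iota_intertwines_general (n d : ℕ)
    (i : ℕ) (hi1 : 1 ≤ i) (hi2 : i ≤ n - 1) :
    (iota n d).comp (T n d i) = (betaTilde n d i).comp (iota n d) := by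
  refine FreeGroup.ext_hom _ _ fun ⟨⟨k, hk⟩, ⟨j, hj⟩⟩ => ?_
  have hin : i < n := by omega
  simp only [MonoidHom.comp_apply, iota_of, T, FreeGroup.lift_apply_of]
  by_cases h₁ : k + 1 + 1 = i
  · rw [if_pos h₁, betaTilde_loop_of_succ_eq h₁ hin.le, map_mul, map_mul, map_inv,
      iota_Y (by omega) (by omega) j (by omega), iota_X (by omega) hin (by omega) (by omega),
      iota_Y (by omega) (by omega) (j + 1) (by omega), loop_inv]
    push_cast; ring_nf
  by_cases h₂ : k + 1 = i
  · subst h₂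
    rw [if_neg h₁, if_pos rfl, Nat.add_sub_cancel, map_mul, map_mul, map_inv, map_inv,
      iota_prod_X (by omega) hin (by omega) j (by omega),
      iota_X (by omega) hin (by omega) (by omega),
      betaTilde_loop_self (by omega) hin.le]
    push_cast; ring_nf
    rw [loop_inv, loop_inv, mul_assoc, loop_mul_loop]
  by_cases h₃ : k + 1 = i + 1
  · obtain rfl : k = i := by omega
    rw [if_neg h₁, if_neg h₂, if_pos rfl, map_mul, map_mul, map_inv,
      iota_Y hi1 hin j (by omega), iota_X (by omega) (by omega) (by omega) (by omega),
      iota_Y hi1 hin (j + 1) (by omega), betaTilde_loop_succ_self hi1 (by omega), loop_inv]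
    push_cast; ring_nf
  · rw [if_neg h₁, if_neg h₂, if_neg h₃, iota_of, betaTilde_loop_of_ne hi1 (by omega) h₁ h₂ h₃]

/-- For each `i` with `1 ≤ i ≤ n−1`, the intertwining identity
`ι ∘ T_i = β̃_i ∘ ι` holds as homomorphisms `F → E`; that is, the action of
`β̃_i` on the elements `ι(x_{k,j})` of `E` is given exactly by the formulas
defining `T_i`. -/
theorem iota_intertwines (n d : ℕ) (hn : 2 ≤ n) (hd : 2 ≤ d)
    (i : ℕ) (hi1 : 1 ≤ i) (hi2 : i ≤ n - 1) :
    (iota n d).comp (T n d i) = (betaTilde n d i).comp (iota n d) :=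
  iota_intertwines_general n d i hi1 hi2
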